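/- Let 1 ≤ k ≤ n and let Γ_k = {μ ∈ ℝⁿ : σ_j(μ) > 0 for j = 1,…,k} be the k-th Gårding cone. Then for every μ ∈ Γ_k and every index i, the partial derivative ∂σ_k/∂μᵢ(μ), which equals σ_{k−1} of the (n−1)-vector obtained from μ by deleting the i-th coordinate, is strictly positive. -/

import Mathlib

/-- The `j`-th elementary symmetric polynomial on `ℝⁿ`. -/
def esymm (n j : ℕ) (μ : Fin n → ℝ) : ℝ :=
  ∑ s ∈ Finset.powersetCard j Finset.univ, ∏ i ∈ s, μ i

/-- The `k`-th Gårding cone `Γ_k = {μ ∈ ℝⁿ : σ_j(μ) > 0 for j = 1,…,k}`. -/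
def GardingCone (n k : ℕ) : Set (Fin n → ℝ) :=
  {μ | ∀ j, 1 ≤ j → j ≤ k → 0 < esymm n j μ}

open Finset Polynomial

section NewtonZero


lemma splits_derivative (p : ℝ[X]) (hp : p.Splits) :
    (derivative p).Splits := by
  by_cases h0 : p.natDegree = 0
  · have : derivative p = 0 := by
      rw [p.eq_C_of_natDegree_eq_zero h0, derivative_C]
    rw [this]; exact Splits.zero
  · rw [splits_iff_card_roots] at hp ⊢
    have h1 := p.card_roots_le_derivative
    have h2 := (derivative p).card_roots'
    have h3 := p.natDegree_derivative_le
    omega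

lemma splits_iterate_derivative (p : ℝ[X]) (hp : p.Splits) (k : ℕ) :
    (derivative^[k] p).Splits := by
  induction k with
  | zero => exact hp
  | succ k ih => rw [Function.iterate_succ_apply']; exact splits_derivative _ ih

lemma eval_sq_ineq_aux (M : Multiset ℝ) (x : ℝ) :
    eval x ((M.map fun a => X - C a).prod) *
      eval x (derivative (derivative (M.map fun a => X - C a).prod)) ≤
    eval x (derivative ((M.map fun a => X - C a).prod)) ^ 2 := by
  induction M using Multiset.induction_on with
  | empty => simp
  | cons a M ih =>
    rw [Multiset.map_cons, Multiset.prod_cons]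
    set Q := (M.map fun a => X - C a).prod with hQ
    have hd : derivative ((X - C a) * Q) = Q + (X - C a) * derivative Q := by
      rw [derivative_mul, derivative_sub, derivative_X, derivative_C]; ring
    have hdd : derivative (derivative ((X - C a) * Q)) =
        2 * derivative Q + (X - C a) * derivative (derivative Q) := by
      rw [hd, derivative_add, derivative_mul, derivative_sub, derivative_X, derivative_C]; ring
    rw [hdd, hd]
    simp only [eval_add, eval_mul, eval_sub, eval_X, eval_C, eval_ofNat]
    nlinarith [mul_nonneg (sq_nonneg (x - a)) (sub_nonneg.2 ih), sq_nonneg (eval x Q)]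

lemma eval_sq_ineq (q : ℝ[X]) (hq : q.Splits) (x : ℝ) :
    eval x q * eval x (derivative (derivative q)) ≤ eval x (derivative q) ^ 2 := by
  have hrw := hq.eq_prod_roots
  rw [hrw]
  set c := q.leadingCoeff
  set R := (q.roots.map fun a => X - C a).prod
  have h1 : derivative (C c * R) = C c * derivative R := by
    rw [derivative_mul, derivative_C]; ring
  have h2 : derivative (derivative (C c * R)) = C c * derivative (derivative R) := by
    rw [h1, derivative_mul, derivative_C]; ring
  rw [h2, h1]
  simp only [eval_mul, eval_C]
  nlinarith [eval_sq_ineq_aux q.roots x, sq_nonneg c]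

lemma newton_zero (M : Multiset ℝ) (j : ℕ) (h1 : M.esymm (j + 1) = 0) :
    M.esymm j * M.esymm (j + 2) ≤ 0 := by
  by_cases hc : j + 2 ≤ Multiset.card M
  · set m := Multiset.card M with hm
    set a := m - (j + 2) with ha
    set P := (M.map fun r => X + C r).prod with hP
    have hsplit : P.Splits := by
      have : P = ((M.map fun r => -r).map fun r => X - C r).prod := by
        rw [hP, Multiset.map_map]
        congr 1
        exact Multiset.map_congr rfl fun r _ => by simp [sub_neg_eq_add]
      rw [splits_iff_card_roots, this, roots_multiset_prod_X_sub_C,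
        natDegree_multiset_prod_X_sub_C_eq_card]
    have keval : ∀ t : ℕ, eval 0 (derivative^[t] P) = (t.factorial : ℝ) * P.coeff t := by
      intro t
      rw [← coeff_zero_eq_eval_zero, coeff_iterate_derivative]
      simp [Nat.descFactorial_self, nsmul_eq_mul]
    have hcoeff : ∀ t : ℕ, t ≤ m → P.coeff t = M.esymm (m - t) := by
      intro t ht
      have h := Multiset.prod_X_add_C_coeff M (k := t) (by omega)
      rw [hm]
      exact h
    have key := eval_sq_ineq (derivative^[a] P) (splits_iterate_derivative P hsplit a) 0
    rw [← Function.iterate_succ_apply' derivative a P,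
      ← Function.iterate_succ_apply' derivative (a+1) P] at key
    rw [keval a, keval (a+1), keval (a+2)] at key
    rw [hcoeff a (by omega), hcoeff (a+1) (by omega), hcoeff (a+2) (by omega)] at key
    have e1 : m - a = j + 2 := by omega
    have e2 : m - (a + 1) = j + 1 := by omega
    have e3 : m - (a + 2) = j := by omega
    rw [e1, e2, e3, h1] at key
    have f1 : (0:ℝ) < (a.factorial : ℝ) := by positivity
    have f2 : (0:ℝ) < ((a+2).factorial : ℝ) := by positivity
    by_contra hcon
    push_neg at hcon
    nlinarith [key, mul_pos (mul_pos f1 f2) hcon]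
  · have : M.esymm (j + 2) = 0 := by
      rw [Multiset.esymm]
      have : M.powersetCard (j + 2) = 0 := by
        rw [← Multiset.card_eq_zero]
        rw [Multiset.card_powersetCard]
        exact Nat.choose_eq_zero_of_lt (by omega)
      rw [this]; simp
    rw [this, mul_zero]

end NewtonZero

section EsymmOn

/-- esymm over a sub-finset of indices -/
def esymmOn {n : ℕ} (A : Finset (Fin n)) (j : ℕ) (μ : Fin n → ℝ) : ℝ :=
  ∑ s ∈ A.powersetCard j, ∏ l ∈ s, μ l

lemma esymm_eq_esymmOn (n j : ℕ) (μ : Fin n → ℝ) : esymm n j μ = esymmOn univ j μ := rfl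

lemma esymmOn_zero {n : ℕ} (A : Finset (Fin n)) (μ : Fin n → ℝ) : esymmOn A 0 μ = 1 := by
  simp [esymmOn]

lemma esymmOn_eq_multiset {n : ℕ} (A : Finset (Fin n)) (j : ℕ) (μ : Fin n → ℝ) :
    esymmOn A j μ = (A.val.map μ).esymm j :=
  (Finset.esymm_map_val μ A j).symm

/-- splitting off one index -/
lemma esymmOn_split {n : ℕ} {A : Finset (Fin n)} {i : Fin n} (hi : i ∈ A) (j : ℕ)
    (μ : Fin n → ℝ) :
    esymmOn A (j + 1) μ = esymmOn (A.erase i) (j + 1) μ + μ i * esymmOn (A.erase i) j μ := by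
  have hA : A = insert i (A.erase i) := (insert_erase hi).symm
  rw [esymmOn]
  conv_lhs => rw [hA]
  rw [powersetCard_succ_insert (notMem_erase i A)]
  rw [sum_union]
  · congr 1
    rw [sum_image (fun x hx y hy hxy => ?_)]
    · rw [esymmOn, mul_sum]
      apply sum_congr rfl
      intro t ht
      have hit : i ∉ t := fun h =>
        notMem_erase i A ((mem_powersetCard.1 ht).1 h)
      rw [prod_insert hit]
    · -- injectivity of insert i on sets not containing i
      have hx' : i ∉ x := fun h => notMem_erase i A ((mem_powersetCard.1 hx).1 h)
      have hy' : i ∉ y := fun h => notMem_erase i A ((mem_powersetCard.1 hy).1 h)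
      have := congrArg (fun s => Finset.erase s i) hxy
      simpa [erase_insert hx', erase_insert hy'] using this
  · rw [disjoint_left]
    intro s hs hs'
    obtain ⟨t, ht, rfl⟩ := mem_image.1 hs'
    exact (fun h => notMem_erase i A ((mem_powersetCard.1 hs).1 h)) (mem_insert_self i t)

/-- counting supersets -/
lemma card_filter_superset {n : ℕ} (u : Finset (Fin n)) (j : ℕ) (hu : u.card ≤ j) :
    (((univ : Finset (Fin n)).powersetCard j).filter fun s => u ⊆ s).card =
      (n - u.card).choose (j - u.card) := by
  have : (((univ : Finset (Fin n)).powersetCard j).filter fun s => u ⊆ s).card =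
      (uᶜ.powersetCard (j - u.card)).card := by
    apply Finset.card_bij' (fun s _ => s \ u) (fun t _ => t ∪ u)
    · intro s hs
      simp only [mem_filter, mem_powersetCard] at hs
      rw [mem_powersetCard]
      exact ⟨fun x hx => by simp [(mem_sdiff.1 hx).2],
        by rw [card_sdiff_of_subset hs.2, hs.1.2]⟩
    · intro t ht
      rw [mem_powersetCard] at ht
      have hdisj : Disjoint t u := by
        rw [disjoint_left]; intro x hx; simpa using ht.1 hx
      simp only [mem_filter, mem_powersetCard]
      refine ⟨⟨subset_univ _, ?_⟩, subset_union_right⟩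
      rw [card_union_of_disjoint hdisj, ht.2]
      omega
    · intro s hs
      simp only [mem_filter, mem_powersetCard] at hs
      exact sdiff_union_of_subset hs.2
    · intro t ht
      rw [mem_powersetCard] at ht
      apply union_sdiff_cancel_right
      rw [disjoint_left]; intro x hx; simpa using ht.1 hx
  rw [this, card_powersetCard, card_compl]
  simp

lemma card_filter_superset_zero {n : ℕ} (u : Finset (Fin n)) (j : ℕ) (hu : j < u.card) :
    (((univ : Finset (Fin n)).powersetCard j).filter fun s => u ⊆ s) = ∅ := by
  rw [filter_eq_empty_iff]
  intro s hs
  rw [mem_powersetCard] at hs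
  intro hsub
  have := card_le_card hsub
  omega

/-- expansion of esymm at a diagonally shifted point -/
lemma esymm_shift (n j : ℕ) (hj : j ≤ n) (μ : Fin n → ℝ) (t : ℝ) :
    esymm n j (fun l => μ l + t) =
      ∑ m ∈ Finset.range (j + 1),
        ((n - m).choose (j - m) : ℝ) * t ^ (j - m) * esymm n m μ := by
  rw [esymm]
  have step1 : ∀ s ∈ (univ : Finset (Fin n)).powersetCard j,
      (∏ l ∈ s, (μ l + t)) = ∑ u ∈ s.powerset, (∏ l ∈ u, μ l) * t ^ (j - u.card) := by
    intro s hs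
    rw [mem_powersetCard] at hs
    rw [prod_add]
    apply sum_congr rfl
    intro u hu
    rw [mem_powerset] at hu
    rw [prod_const, card_sdiff_of_subset hu, hs.2]
  rw [sum_congr rfl step1]
  rw [sum_comm' (t' := (univ : Finset (Fin n)).powerset)
      (s' := fun u => ((univ : Finset (Fin n)).powersetCard j).filter fun s => u ⊆ s)
      (fun s u => by
        simp only [mem_powerset, mem_filter, mem_powersetCard, subset_univ, true_and]
        tauto)]
  have inner : ∀ u ∈ (univ : Finset (Fin n)).powerset,
      (∑ _s ∈ ((univ : Finset (Fin n)).powersetCard j).filter (fun s => u ⊆ s),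
        (∏ l ∈ u, μ l) * t ^ (j - u.card)) =
      ((((univ : Finset (Fin n)).powersetCard j).filter fun s => u ⊆ s).card : ℝ) *
        ((∏ l ∈ u, μ l) * t ^ (j - u.card)) := by
    intro u _
    rw [sum_const, nsmul_eq_mul]
  rw [sum_congr rfl inner]
  rw [powerset_card_disjiUnion]; refine (sum_disjiUnion _ _ _).trans ?_
  rw [card_univ, Fintype.card_fin]
  have hsub : Finset.range (j + 1) ⊆ Finset.range (n + 1) :=
    range_subset_range.2 (Nat.succ_le_succ hj)
  rw [← Finset.sum_subset hsub
      (f := fun m => ∑ u ∈ (univ : Finset (Fin n)).powersetCard m,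
        ((((univ : Finset (Fin n)).powersetCard j).filter fun s => u ⊆ s).card : ℝ) *
          ((∏ l ∈ u, μ l) * t ^ (j - u.card)))]
  · apply sum_congr rfl
    intro m hm
    rw [mem_range] at hm
    rw [esymm, mul_sum]
    apply sum_congr rfl
    intro u hu
    rw [mem_powersetCard] at hu
    rw [card_filter_superset u j (by omega), hu.2]
    ring
  · intro m hm hm'
    rw [mem_range] at hm
    rw [mem_range] at hm'
    apply sum_eq_zero
    intro u hu
    rw [mem_powersetCard] at hu
    rw [card_filter_superset_zero u j (by omega)]
    simp

lemma shift_mem_cone {n k : ℕ} (hkn : k ≤ n) {μ : Fin n → ℝ}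
    (hμ : μ ∈ GardingCone n k) {t : ℝ} (ht : 0 ≤ t) :
    (fun l => μ l + t) ∈ GardingCone n k := by
  intro j hj1 hjk
  rw [esymm_shift n j (le_trans hjk hkn)]
  have hterm : ∀ m ∈ Finset.range (j + 1),
      0 ≤ ((n - m).choose (j - m) : ℝ) * t ^ (j - m) * esymm n m μ := by
    intro m hm
    rw [mem_range] at hm
    rcases Nat.eq_zero_or_pos m with rfl | hm1
    · have : esymm n 0 μ = 1 := by simp [esymm]
      rw [this]
      positivity
    · have := hμ m hm1 (by omega)
      positivity
  apply sum_pos' hterm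
  refine ⟨j, self_mem_range_succ j, ?_⟩
  have : esymm n j μ > 0 := hμ j hj1 hjk
  simp only [Nat.sub_self, pow_zero, Nat.choose_zero_right, Nat.cast_one]
  nlinarith


lemma nonvanish {n k : ℕ} (hk1 : 1 ≤ k) (hkn : k ≤ n) {μ : Fin n → ℝ}
    (hμ : μ ∈ GardingCone n k) (i : Fin n) :
    esymmOn ((univ : Finset (Fin n)).erase i) (k - 1) μ ≠ 0 := by
  set A := (univ : Finset (Fin n)).erase i with hA
  intro h0
  rcases le_or_gt (μ i) 0 with hneg | hpos
  · -- μ i ≤ 0 : all esymmOn A j are positive, contradiction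
    have pos : ∀ j, j ≤ k - 1 → 0 < esymmOn A j μ := by
      intro j
      induction j with
      | zero => intro _; rw [esymmOn_zero]; norm_num
      | succ j ih =>
        intro hj
        have hj' : j ≤ k - 1 := by omega
        have hih := ih hj'
        have hsplit := esymmOn_split (mem_univ i) j μ
        rw [← esymm_eq_esymmOn] at hsplit
        have hpos' := hμ (j + 1) (by omega) (by omega)
        rw [← hA] at hsplit
        nlinarith
    exact absurd h0 (ne_of_gt (pos (k - 1) le_rfl))
  · -- μ i > 0
    rcases Nat.lt_or_ge k 2 with hk2 | hk2
    · -- k = 1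
      have : k - 1 = 0 := by omega
      rw [this, esymmOn_zero] at h0
      norm_num at h0
    · -- k ≥ 2
      obtain ⟨j, rfl⟩ : ∃ j, k = j + 2 := ⟨k - 2, by omega⟩
      -- h0 : esymmOn A (j+1) μ = 0
      have hk1' : (j + 2) - 1 = j + 1 := by omega
      rw [hk1'] at h0
      have e1 := esymmOn_split (mem_univ i) j μ
      have e2 := esymmOn_split (mem_univ i) (j + 1) μ
      rw [← esymm_eq_esymmOn, ← hA] at e1 e2
      rw [h0] at e1 e2
      have p1 : 0 < esymm n (j + 1) μ := hμ (j + 1) (by omega) (by omega)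
      have p2 : 0 < esymm n (j + 2) μ := hμ (j + 2) (by omega) (by omega)
      have q1 : 0 < esymmOn A j μ := by nlinarith
      have q2 : 0 < esymmOn A (j + 2) μ := by nlinarith
      have := newton_zero (A.val.map μ) j (by rw [← esymmOn_eq_multiset]; exact h0)
      rw [← esymmOn_eq_multiset, ← esymmOn_eq_multiset] at this
      nlinarith

lemma main_pos {n k : ℕ} (hk1 : 1 ≤ k) (hkn : k ≤ n) {μ : Fin n → ℝ}
    (hμ : μ ∈ GardingCone n k) (i : Fin n) :
    0 < esymmOn ((univ : Finset (Fin n)).erase i) (k - 1) μ := by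
  set g : ℝ → ℝ := fun t => esymmOn ((univ : Finset (Fin n)).erase i) (k - 1)
    (fun l => μ l + t) with hg
  have hcont : Continuous g := by
    apply continuous_finset_sum
    intro s _
    apply continuous_finset_prod
    intro l _
    exact continuous_const.add continuous_id
  set T : ℝ := 1 + ∑ l, |μ l| with hT
  have hT0 : (0:ℝ) ≤ T := by
    have : (0:ℝ) ≤ ∑ l, |μ l| := Finset.sum_nonneg fun l _ => abs_nonneg _
    linarith
  have hTpos : ∀ l, 0 < μ l + T := by
    intro l
    have h1 : |μ l| ≤ ∑ l, |μ l| :=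
      Finset.single_le_sum (fun l _ => abs_nonneg (μ l)) (mem_univ l)
    have h2 : -μ l ≤ |μ l| := neg_le_abs _
    simp only [hT]
    linarith
  have hgT : 0 < g T := by
    rw [hg]
    apply Finset.sum_pos
    · intro s _
      exact Finset.prod_pos fun l _ => hTpos l
    · apply Finset.powersetCard_nonempty.2
      rw [card_erase_of_mem (mem_univ i), card_univ, Fintype.card_fin]
      omega
  have hg0 : g 0 = esymmOn ((univ : Finset (Fin n)).erase i) (k - 1) μ := by
    simp only [hg, add_zero]
  have hne : ∀ t ∈ Set.Icc (0:ℝ) T, g t ≠ 0 := by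
    intro t ht
    exact nonvanish hk1 hkn (shift_mem_cone hkn hμ ht.1) i
  by_contra hcon
  push_neg at hcon
  have hlt : g 0 < 0 := by
    rcases lt_or_eq_of_le hcon with h | h
    · rwa [hg0]
    · exact absurd (hg0.trans h) (hne 0 ⟨le_rfl, hT0⟩)
  have := intermediate_value_Icc hT0 hcont.continuousOn
  have h0mem : (0:ℝ) ∈ Set.Icc (g 0) (g T) := ⟨le_of_lt hlt, le_of_lt hgT⟩
  obtain ⟨t, htmem, htval⟩ := this h0mem
  exact hne t htmem htval

lemma esymm_hasFDerivAt (n k : ℕ) (μ : Fin n → ℝ) :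
    HasFDerivAt (esymm n k)
      (∑ s ∈ Finset.powersetCard k (univ : Finset (Fin n)),
        ∑ l ∈ s, (∏ j ∈ s.erase l, μ j) •
          (ContinuousLinearMap.proj l : (Fin n → ℝ) →L[ℝ] ℝ)) μ :=
  HasFDerivAt.fun_sum fun s _ => HasFDerivAt.finset_prod fun l _ => hasFDerivAt_apply l μ

lemma fderiv_esymm_apply (n k : ℕ) (hk1 : 1 ≤ k) (μ : Fin n → ℝ) (i : Fin n) :
    fderiv ℝ (esymm n k) μ (Pi.single i 1) = esymmOn ((univ : Finset (Fin n)).erase i) (k - 1) μ := by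
  rw [(esymm_hasFDerivAt n k μ).fderiv]
  rw [ContinuousLinearMap.sum_apply]
  have hterm : ∀ s ∈ Finset.powersetCard k (univ : Finset (Fin n)),
      (∑ l ∈ s, (∏ j ∈ s.erase l, μ j) •
        (ContinuousLinearMap.proj l : (Fin n → ℝ) →L[ℝ] ℝ)) (Pi.single i 1) =
      if i ∈ s then ∏ j ∈ s.erase i, μ j else 0 := by
    intro s _
    rw [ContinuousLinearMap.sum_apply]
    rw [show (∑ l ∈ s, ((∏ j ∈ s.erase l, μ j) •
        (ContinuousLinearMap.proj l : (Fin n → ℝ) →L[ℝ] ℝ)) (Pi.single i 1)) =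
        ∑ l ∈ s, if l = i then ∏ j ∈ s.erase l, μ j else 0 from
      Finset.sum_congr rfl fun l _ => by
        rw [ContinuousLinearMap.smul_apply, ContinuousLinearMap.proj_apply,
          Pi.single_apply, smul_eq_mul]
        split <;> simp]
    exact Finset.sum_ite_eq' s i _
  rw [Finset.sum_congr rfl hterm, Finset.sum_ite, Finset.sum_const_zero, add_zero]
  rw [esymmOn]
  apply Finset.sum_nbij' (fun s => s.erase i) (fun u => insert i u)
  · intro s hs
    simp only [mem_filter, mem_powersetCard] at hs
    rw [mem_powersetCard]
    exact ⟨erase_subset_erase i hs.1.1, by rw [card_erase_of_mem hs.2, hs.1.2]⟩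
  · intro u hu
    rw [mem_powersetCard] at hu
    have hiu : i ∉ u := fun h => (notMem_erase i univ) (hu.1 h)
    simp only [mem_filter, mem_powersetCard]
    refine ⟨⟨subset_univ _, ?_⟩, mem_insert_self i u⟩
    rw [card_insert_of_notMem hiu, hu.2]
    omega
  · intro s hs
    simp only [mem_filter] at hs
    exact insert_erase hs.2
  · intro u hu
    rw [mem_powersetCard] at hu
    exact erase_insert fun h => (notMem_erase i univ) (hu.1 h)
  · intro s _
    rfl

/-- For `1 ≤ k ≤ n` and `μ` in the Gårding cone `Γ_k`, the partial derivative
`∂σ_k/∂μᵢ(μ)` equals `σ_{k-1}` of the vector obtained from `μ` by deleting the `i`-th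
coordinate, and is strictly positive. -/
theorem stmt_10 (n k : ℕ) (hk1 : 1 ≤ k) (hkn : k ≤ n)
    (μ : Fin n → ℝ) (hμ : μ ∈ GardingCone n k) (i : Fin n) :
    fderiv ℝ (esymm n k) μ (Pi.single i 1) =
        ∑ s ∈ Finset.powersetCard (k - 1) (Finset.univ.erase i), ∏ j ∈ s, μ j ∧
      0 < fderiv ℝ (esymm n k) μ (Pi.single i 1) := by
  have heq := fderiv_esymm_apply n k hk1 μ i
  constructor
  · rw [heq]; rfl
  · rw [heq]; exact main_pos hk1 hkn hμ i

end EsymmOn
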